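/- arXiv:2501.04151 — 3 statements merged into one kernel-verified Lean document; each statement's English description precedes it below -/
import Mathlib

section
/- Let E ∈ ℝ^{m×m}, c, x ∈ ℝ^m, λ, δ ∈ ℝ, and ‖·‖ a sub-multiplicative matrix norm (with compatible vector norm) such that ‖(λ+δ)E‖ < 1. Define o(μ) = cᵀ (I + μE)^{-1} x₀ where x(λ) = (I + λE)^{-1} x₀, assuming I + λE invertible. Then |o(λ+δ) − o(λ)| ≤ |δ| ‖c‖ ‖E x(λ)‖ / (1 − |λ+δ| ‖E‖). -/
/-!
Write `A = I + λE`, `B = I + (λ+δ)E` and `d = x(λ+δ) - x(λ)`. Then `B d = x₀ - B x(λ) = (A - B) x(λ) = -δ E x(λ)`,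
so `d = -δ E x(λ) - (λ+δ)E d` and the triangle inequality gives `‖d‖ ≤ |δ| ‖E x(λ)‖ + |λ+δ| ‖E‖ ‖d‖`,
which solves to `‖d‖ ≤ |δ| ‖E x(λ)‖ / (1 - |λ+δ| ‖E‖)`; finally `|o(λ+δ) - o(λ)| = |cᵀ d| ≤ ‖c‖ ‖d‖`.
The same estimate with right-hand side `0` shows that `B` is injective, so the inverse in `x(λ+δ)` is a true inverse rather than Mathlib's junk value.
-/

open Matrix

section CompatibleNorms

variable {n : Type*} [Fintype n] [DecidableEq n]
  (N : Matrix n n ℝ → ℝ) (nv : (n → ℝ) → ℝ)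

theorem le_div_one_sub_of_one_add_mulVec_eq
    (hvtri : ∀ x y, nv (x + y) ≤ nv x + nv y)
    (hvhomog : ∀ (c : ℝ) x, nv (c • x) = |c| * nv x)
    (hcompat : ∀ (A : Matrix n n ℝ) (x : n → ℝ), nv (A *ᵥ x) ≤ N A * nv x)
    {K : Matrix n n ℝ} (hK : N K < 1) {d r : n → ℝ} (h : (1 + K) *ᵥ d = r) :
    nv d ≤ nv r / (1 - N K) := by
  have hd : d = r + (-1 : ℝ) • (K *ᵥ d) := by
    rw [← h, add_mulVec, one_mulVec, neg_one_smul, add_neg_cancel_right]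
  have hrec : nv d ≤ nv r + N K * nv d :=
    calc nv d ≤ nv r + nv ((-1 : ℝ) • (K *ᵥ d)) := by
          conv_lhs => rw [hd]
          exact hvtri _ _
      _ = nv r + nv (K *ᵥ d) := by rw [hvhomog, abs_neg, abs_one, one_mul]
      _ ≤ nv r + N K * nv d := by linarith [hcompat K d]
  rw [le_div_iff₀ (sub_pos.mpr hK)]
  linarith

theorem isUnit_det_one_add_of_lt_one
    (hvnonneg : ∀ x, 0 ≤ nv x)
    (hvtri : ∀ x y, nv (x + y) ≤ nv x + nv y)
    (hvhomog : ∀ (c : ℝ) x, nv (c • x) = |c| * nv x)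
    (hcompat : ∀ (A : Matrix n n ℝ) (x : n → ℝ), nv (A *ᵥ x) ≤ N A * nv x)
    (hdual : ∀ (c x : n → ℝ), |c ⬝ᵥ x| ≤ nv c * nv x)
    {K : Matrix n n ℝ} (hK : N K < 1) : IsUnit (1 + K).det := by
  rw [← isUnit_iff_isUnit_det, ← mulVec_injective_iff_isUnit]
  intro u w huw
  have hker : (1 + K) *ᵥ (u - w) = 0 := by rw [mulVec_sub, huw, sub_self]
  have hnv_zero : nv (0 : n → ℝ) = 0 := by simpa using hvhomog 0 0
  have hnv : nv (u - w) = 0 := by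
    have := le_div_one_sub_of_one_add_mulVec_eq N nv hvtri hvhomog hcompat hK hker
    rw [hnv_zero, zero_div] at this
    exact le_antisymm this (hvnonneg _)
  have hdot : (u - w) ⬝ᵥ (u - w) = 0 := by
    simpa [hnv] using hdual (u - w) (u - w)
  exact sub_eq_zero.mp (dotProduct_self_eq_zero.mp hdot)

end CompatibleNorms

theorem one_add_smul_mulVec_sub_resolvent {n : Type*} [Fintype n] [DecidableEq n]
    (E : Matrix n n ℝ) (x₀ : n → ℝ) {s t : ℝ}
    (hs : IsUnit (1 + s • E).det) (ht : IsUnit (1 + t • E).det) :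
    (1 + t • E) *ᵥ ((1 + t • E)⁻¹ *ᵥ x₀ - (1 + s • E)⁻¹ *ᵥ x₀) =
      (s - t) • (E *ᵥ ((1 + s • E)⁻¹ *ᵥ x₀)) := by
  set y := (1 + s • E)⁻¹ *ᵥ x₀
  have hy : (1 + s • E) *ᵥ y = x₀ := by rw [mulVec_mulVec, mul_nonsing_inv _ hs, one_mulVec]
  rw [mulVec_sub, mulVec_mulVec, mul_nonsing_inv _ ht, one_mulVec]
  nth_rw 1 [← hy]
  rw [← sub_mulVec, ← smul_mulVec]
  congr 1
  module

theorem stmt12_general {m : ℕ} (N : Matrix (Fin m) (Fin m) ℝ → ℝ)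
    (nv : (Fin m → ℝ) → ℝ)
    (hNhomog : ∀ (c : ℝ) A, N (c • A) = |c| * N A)
    (hvnonneg : ∀ x, 0 ≤ nv x)
    (hvtri : ∀ x y, nv (x + y) ≤ nv x + nv y)
    (hvhomog : ∀ (c : ℝ) x, nv (c • x) = |c| * nv x)
    (hcompat : ∀ (A : Matrix (Fin m) (Fin m) ℝ) (x : Fin m → ℝ), nv (A *ᵥ x) ≤ N A * nv x)
    (hdual : ∀ (c x : Fin m → ℝ), |c ⬝ᵥ x| ≤ nv c * nv x)
    (E : Matrix (Fin m) (Fin m) ℝ) (c x₀ : Fin m → ℝ) (lam δ : ℝ)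
    (hlam : IsUnit ((1 : Matrix (Fin m) (Fin m) ℝ) + lam • E).det)
    (hsmall : N ((lam + δ) • E) < 1)
    (x : ℝ → (Fin m → ℝ))
    (hx : ∀ μ : ℝ, x μ = ((1 : Matrix (Fin m) (Fin m) ℝ) + μ • E)⁻¹ *ᵥ x₀)
    (o : ℝ → ℝ) (ho : ∀ μ : ℝ, o μ = c ⬝ᵥ x μ) :
    |o (lam + δ) - o lam| ≤
      |δ| * nv c * nv (E *ᵥ x lam) / (1 - |lam + δ| * N E) := by
  have hB := isUnit_det_one_add_of_lt_one N nv hvnonneg hvtri hvhomog hcompat hdual hsmall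
  have hdiff := le_div_one_sub_of_one_add_mulVec_eq N nv hvtri hvhomog hcompat hsmall
    (one_add_smul_mulVec_sub_resolvent E x₀ hlam hB)
  rw [← hx, ← hx, hvhomog, hNhomog, sub_add_cancel_left, abs_neg] at hdiff
  calc |o (lam + δ) - o lam| = |c ⬝ᵥ (x (lam + δ) - x lam)| := by rw [ho, ho, dotProduct_sub]
    _ ≤ nv c * nv (x (lam + δ) - x lam) := hdual _ _
    _ ≤ nv c * (|δ| * nv (E *ᵥ x lam) / (1 - |lam + δ| * N E)) :=
      mul_le_mul_of_nonneg_left hdiff (hvnonneg c)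
    _ = |δ| * nv c * nv (E *ᵥ x lam) / (1 - |lam + δ| * N E) := by ring

theorem stmt12 {m : ℕ} (N : Matrix (Fin m) (Fin m) ℝ → ℝ)
    (nv : (Fin m → ℝ) → ℝ)
    (hNnonneg : ∀ A, 0 ≤ N A)
    (hNtri : ∀ A B, N (A + B) ≤ N A + N B)
    (hNhomog : ∀ (c : ℝ) A, N (c • A) = |c| * N A)
    (hNsub : ∀ A B, N (A * B) ≤ N A * N B)
    (hvnonneg : ∀ x, 0 ≤ nv x)
    (hvtri : ∀ x y, nv (x + y) ≤ nv x + nv y)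
    (hvhomog : ∀ (c : ℝ) x, nv (c • x) = |c| * nv x)
    (hcompat : ∀ (A : Matrix (Fin m) (Fin m) ℝ) (x : Fin m → ℝ), nv (A *ᵥ x) ≤ N A * nv x)
    (hdual : ∀ (c x : Fin m → ℝ), |c ⬝ᵥ x| ≤ nv c * nv x)
    (E : Matrix (Fin m) (Fin m) ℝ) (c x₀ : Fin m → ℝ) (lam δ : ℝ)
    (hlam : IsUnit ((1 : Matrix (Fin m) (Fin m) ℝ) + lam • E).det)
    (hsmall : N ((lam + δ) • E) < 1)
    (x : ℝ → (Fin m → ℝ))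
    (hx : ∀ μ : ℝ, x μ = ((1 : Matrix (Fin m) (Fin m) ℝ) + μ • E)⁻¹ *ᵥ x₀)
    (o : ℝ → ℝ) (ho : ∀ μ : ℝ, o μ = c ⬝ᵥ x μ) :
    |o (lam + δ) - o lam| ≤
      |δ| * nv c * nv (E *ᵥ x lam) / (1 - |lam + δ| * N E) :=
  stmt12_general N nv hNhomog hvnonneg hvtri hvhomog hcompat hdual E c x₀ lam δ hlam hsmall x hx o
    ho
end

section
/- With the setup of the previous bound (‖(λ+δ)E‖ < 1, I + λE invertible, x(μ) = (I + μE)^{-1} x₀), for each coordinate i: |(x(λ+δ) − x(λ))_i| ≤ |δ| ‖e_i‖ ‖E x(λ)‖ / (1 − |λ+δ| ‖E‖), where e_i is the i-th standard basis vector. -/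
/-!
Write `A = I + λE`, `B = I + (λ+δ)E` and `d = x(λ+δ) - x(λ)`. The resolvent identity gives
`B d = -δ E x(λ)`, and since `B = I + F` with `‖F‖ < 1`, the triangle inequality yields
`(1 - ‖F‖) ‖v‖ ≤ ‖B v‖` for every `v` (which also shows that `B` is invertible). Hence
`‖d‖ ≤ |δ| ‖E x(λ)‖ / (1 - |λ+δ| ‖E‖)`, and the coordinate `d_i = e_i ⬝ d` is bounded through
the duality estimate `|c ⬝ v| ≤ ‖c‖ ‖v‖`.
-/

open Matrix

section DualBound

variable {ι : Type*} [Fintype ι] [DecidableEq ι] (nv : (ι → ℝ) → ℝ)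

theorem abs_apply_le_of_abs_dotProduct_le (hdual : ∀ c v : ι → ℝ, |c ⬝ᵥ v| ≤ nv c * nv v)
    (v : ι → ℝ) (i : ι) : |v i| ≤ nv (Pi.single i 1) * nv v := by
  simpa only [single_one_dotProduct] using hdual (Pi.single i 1) v

theorem eq_zero_of_abs_dotProduct_le (hdual : ∀ c v : ι → ℝ, |c ⬝ᵥ v| ≤ nv c * nv v)
    {v : ι → ℝ} (hv : nv v = 0) : v = 0 := by
  funext i
  have := abs_apply_le_of_abs_dotProduct_le nv hdual v i
  rw [hv, mul_zero] at this
  exact abs_nonpos_iff.mp this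

end DualBound

section Contraction

variable {ι : Type*} [Fintype ι] [DecidableEq ι] (p : Seminorm ℝ (ι → ℝ))
  (N : Matrix ι ι ℝ → ℝ) (hcompat : ∀ (A : Matrix ι ι ℝ) (v : ι → ℝ), p (A *ᵥ v) ≤ N A * p v)
include hcompat

theorem one_sub_mul_le_one_add_mulVec (F : Matrix ι ι ℝ) (v : ι → ℝ) :
    (1 - N F) * p v ≤ p ((1 + F) *ᵥ v) := by
  have hv : v = (1 + F) *ᵥ v - F *ᵥ v := by
    rw [add_mulVec, one_mulVec, add_sub_cancel_right]
  have := calc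
    p v = p ((1 + F) *ᵥ v - F *ᵥ v) := congrArg p hv
    _ ≤ p ((1 + F) *ᵥ v) + p (F *ᵥ v) := map_sub_le_add p _ _
    _ ≤ p ((1 + F) *ᵥ v) + N F * p v := add_le_add_right (hcompat F v) _
  linarith

theorem isUnit_det_one_add (hdual : ∀ c v : ι → ℝ, |c ⬝ᵥ v| ≤ p c * p v)
    {F : Matrix ι ι ℝ} (hF : N F < 1) : IsUnit (1 + F).det := by
  rw [isUnit_iff_ne_zero, Ne, ← exists_mulVec_eq_zero_iff]
  rintro ⟨v, hv0, hFv⟩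
  have hle := one_sub_mul_le_one_add_mulVec p N hcompat F v
  rw [hFv, map_zero] at hle
  have hpv : p v = 0 :=
    le_antisymm (nonpos_of_mul_nonpos_right hle (sub_pos.mpr hF)) (apply_nonneg p v)
  exact hv0 (eq_zero_of_abs_dotProduct_le p hdual hpv)

end Contraction

theorem Matrix.mulVec_inv_mulVec_sub_inv_mulVec {ι R : Type*} [Fintype ι] [DecidableEq ι]
    [CommRing R] {A B : Matrix ι ι R} (hA : IsUnit A.det) (hB : IsUnit B.det) (b : ι → R) :
    B *ᵥ (B⁻¹ *ᵥ b - A⁻¹ *ᵥ b) = -((B - A) *ᵥ (A⁻¹ *ᵥ b)) := by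
  have hAb : A *ᵥ (A⁻¹ *ᵥ b) = b := by rw [mulVec_mulVec, mul_nonsing_inv _ hA, one_mulVec]
  have hBb : B *ᵥ (B⁻¹ *ᵥ b) = b := by rw [mulVec_mulVec, mul_nonsing_inv _ hB, one_mulVec]
  rw [mulVec_sub, hBb, sub_mulVec, hAb, neg_sub]

theorem stmt13_general {m : ℕ} (N : Matrix (Fin m) (Fin m) ℝ → ℝ)
    (nv : (Fin m → ℝ) → ℝ)
    (hNhomog : ∀ (c : ℝ) A, N (c • A) = |c| * N A)
    (hvtri : ∀ x y, nv (x + y) ≤ nv x + nv y)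
    (hvhomog : ∀ (c : ℝ) x, nv (c • x) = |c| * nv x)
    (hcompat : ∀ (A : Matrix (Fin m) (Fin m) ℝ) (x : Fin m → ℝ), nv (A *ᵥ x) ≤ N A * nv x)
    (hdual : ∀ (c x : Fin m → ℝ), |c ⬝ᵥ x| ≤ nv c * nv x)
    (E : Matrix (Fin m) (Fin m) ℝ) (x₀ : Fin m → ℝ) (lam δ : ℝ)
    (hlam : IsUnit ((1 : Matrix (Fin m) (Fin m) ℝ) + lam • E).det)
    (hsmall : N ((lam + δ) • E) < 1)
    (x : ℝ → (Fin m → ℝ))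
    (hx : ∀ μ : ℝ, x μ = ((1 : Matrix (Fin m) (Fin m) ℝ) + μ • E)⁻¹ *ᵥ x₀) :
    ∀ i : Fin m,
      |(x (lam + δ) - x lam) i| ≤
        |δ| * nv (Pi.single i 1) * nv (E *ᵥ x lam) / (1 - |lam + δ| * N E) := by
  intro i
  let p : Seminorm ℝ (Fin m → ℝ) := Seminorm.of nv hvtri (by simpa only [Real.norm_eq_abs])
  have hB := isUnit_det_one_add p N hcompat hdual hsmall
  have hBd : (1 + (lam + δ) • E) *ᵥ (x (lam + δ) - x lam) = -(δ • (E *ᵥ x lam)) := by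
    rw [hx (lam + δ), hx lam, mulVec_inv_mulVec_sub_inv_mulVec hlam hB, add_smul,
      add_sub_add_left_eq_sub, add_sub_cancel_left, smul_mulVec]
  set d := x (lam + δ) - x lam
  have hgap : 0 < 1 - |lam + δ| * N E := by rw [← hNhomog]; linarith
  have hd : (1 - |lam + δ| * N E) * nv d ≤ |δ| * nv (E *ᵥ x lam) := by
    have h := one_sub_mul_le_one_add_mulVec p N hcompat ((lam + δ) • E) d
    rwa [hNhomog, hBd, map_neg_eq_map, map_smul_eq_mul, Real.norm_eq_abs] at h
  calc |d i| ≤ nv (Pi.single i 1) * nv d := abs_apply_le_of_abs_dotProduct_le nv hdual d i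
    _ ≤ nv (Pi.single i 1) * (|δ| * nv (E *ᵥ x lam) / (1 - |lam + δ| * N E)) :=
        mul_le_mul_of_nonneg_left ((le_div_iff₀' hgap).mpr hd) (apply_nonneg p _)
    _ = |δ| * nv (Pi.single i 1) * nv (E *ᵥ x lam) / (1 - |lam + δ| * N E) := by ring

theorem stmt13 {m : ℕ} (N : Matrix (Fin m) (Fin m) ℝ → ℝ)
    (nv : (Fin m → ℝ) → ℝ)
    (hNnonneg : ∀ A, 0 ≤ N A)
    (hNtri : ∀ A B, N (A + B) ≤ N A + N B)
    (hNhomog : ∀ (c : ℝ) A, N (c • A) = |c| * N A)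
    (hNsub : ∀ A B, N (A * B) ≤ N A * N B)
    (hvnonneg : ∀ x, 0 ≤ nv x)
    (hvtri : ∀ x y, nv (x + y) ≤ nv x + nv y)
    (hvhomog : ∀ (c : ℝ) x, nv (c • x) = |c| * nv x)
    (hcompat : ∀ (A : Matrix (Fin m) (Fin m) ℝ) (x : Fin m → ℝ), nv (A *ᵥ x) ≤ N A * nv x)
    (hdual : ∀ (c x : Fin m → ℝ), |c ⬝ᵥ x| ≤ nv c * nv x)
    (E : Matrix (Fin m) (Fin m) ℝ) (x₀ : Fin m → ℝ) (lam δ : ℝ)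
    (hlam : IsUnit ((1 : Matrix (Fin m) (Fin m) ℝ) + lam • E).det)
    (hsmall : N ((lam + δ) • E) < 1)
    (x : ℝ → (Fin m → ℝ))
    (hx : ∀ μ : ℝ, x μ = ((1 : Matrix (Fin m) (Fin m) ℝ) + μ • E)⁻¹ *ᵥ x₀) :
    ∀ i : Fin m,
      |(x (lam + δ) - x lam) i| ≤
        |δ| * nv (Pi.single i 1) * nv (E *ᵥ x lam) / (1 - |lam + δ| * N E) :=
  stmt13_general N nv hNhomog hvtri hvhomog hcompat hdual E x₀ lam δ hlam hsmall x hx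
end

section
/- Tweaked eigendecomposition formula: let E ∈ ℝ^{m×m}, α, β as above, F = [[E, α],[β, 0]] diagonalizable as F = QΣQ^{-1} with Σ diagonal, and u, v such that u vᵀ = Q^{-1} blockDiag(αβ,0) Q. Set R(λ) = I_{m+1} + λΣ. If R(λ) is invertible, 1 + λ² vᵀ R(λ)^{-1} u ≠ 0, and I_m + λE is invertible, then for any b ∈ ℝ^m: (I_m + λE)^{-1} b = [I_m 0] · Q (R(λ)^{-1} − λ² R(λ)^{-1} u vᵀ R(λ)^{-1} / (1 + λ² vᵀ R(λ)^{-1} u)) Q^{-1} · [I_m; 0] b. -/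
/-!
With `G = 1 + λ F + λ² blockDiag(α β, 0) = [[1 + λ E + λ² α β, λ α], [λ β, 1]]`, the hypotheses give
`Q⁻¹ G Q = R(λ) + λ² u vᵀ`, so the Sherman–Morrison formula identifies the bracketed matrix,
conjugated by `Q`, with `G⁻¹`. The top-left block of `G⁻¹` is the inverse of the Schur complement
of the bottom-right `1`, which is `1 + λ E + λ² α β - (λ α)(λ β) = 1 + λ E`.
-/

open Matrix

namespace Matrix

section CommRing

variable {m n α : Type*} [Fintype n] [DecidableEq n] [CommRing α]

theorem inv_conj {Q : Matrix n n α} (hQ : IsUnit Q.det) (A : Matrix n n α) :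
    (Q * A * Q⁻¹)⁻¹ = Q * A⁻¹ * Q⁻¹ := by
  rw [mul_inv_rev, mul_inv_rev, nonsing_inv_nonsing_inv Q hQ, Matrix.mul_assoc]

variable [DecidableEq m]

theorem one_add_smul_fromBlocks (E : Matrix m m α) (a : Matrix m n α) (b : Matrix n m α) (t : α) :
    1 + t • fromBlocks E a b 0 + t ^ 2 • fromBlocks (a * b) 0 0 0 =
      fromBlocks (1 + t • E + t ^ 2 • (a * b)) (t • a) (t • b) 1 := by
  rw [← fromBlocks_one, fromBlocks_smul, fromBlocks_smul, fromBlocks_add, fromBlocks_add]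
  simp

variable [Fintype m]

theorem inv_fromBlocks_one₂₂ (A : Matrix m m α) (B : Matrix m n α) (C : Matrix n m α)
    (h : IsUnit (A - B * C).det) :
    (fromBlocks A B C 1)⁻¹ =
      fromBlocks (A - B * C)⁻¹ (-((A - B * C)⁻¹ * B)) (-(C * (A - B * C)⁻¹))
        (1 + C * (A - B * C)⁻¹ * B) := by
  refine inv_eq_left_inv ?_
  set S := A - B * C with hSdef
  have hS : S⁻¹ * S = 1 := nonsing_inv_mul S h
  rw [fromBlocks_multiply, ← fromBlocks_one]
  congr 1
  · calc S⁻¹ * A + -(S⁻¹ * B) * C = S⁻¹ * (A - B * C) := by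
          simp only [Matrix.mul_sub, Matrix.neg_mul, Matrix.mul_assoc]
          abel
      _ = 1 := hS
  · simp
  · calc -(C * S⁻¹) * A + (1 + C * S⁻¹ * B) * C = C - C * (S⁻¹ * (A - B * C)) := by
          simp only [Matrix.mul_sub, Matrix.neg_mul, Matrix.add_mul, Matrix.one_mul,
            Matrix.mul_assoc]
          abel
      _ = 0 := by rw [← hSdef, hS, Matrix.mul_one, sub_self]
  · simp

theorem toBlocks₁₁_inv_fromBlocks_one₂₂ (A : Matrix m m α) (B : Matrix m n α) (C : Matrix n m α) :
    (fromBlocks A B C 1)⁻¹.toBlocks₁₁ = (A - B * C)⁻¹ := by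
  by_cases h : IsUnit (A - B * C).det
  · rw [inv_fromBlocks_one₂₂ A B C h, toBlocks_fromBlocks₁₁]
  · -- both inverses are junk `0`: the block matrix has the same determinant as `A - B * C`
    rw [nonsing_inv_apply_not_isUnit _ h, nonsing_inv_apply_not_isUnit]
    · rfl
    · rwa [det_fromBlocks_one₂₂]

end CommRing

theorem mulVec_sumElim_zero_inl {m n α : Type*} [Fintype m] [Fintype n] [Semiring α]
    (M : Matrix (m ⊕ n) (m ⊕ n) α) (b : m → α) (i : m) :
    (M *ᵥ Sum.elim b (fun _ => 0)) (Sum.inl i) = (M.toBlocks₁₁ *ᵥ b) i := by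
  change (M *ᵥ Sum.elim b 0) _ = _
  rw [← fromBlocks_toBlocks M, fromBlocks_mulVec]
  simp

theorem vecMulVec_mul_mul_vecMulVec {n α : Type*} [Fintype n] [CommRing α] (A : Matrix n n α)
    (u v : n → α) : vecMulVec u v * A * vecMulVec u v = (v ⬝ᵥ A *ᵥ u) • vecMulVec u v := by
  rw [vecMulVec_mul, vecMulVec_mul_vecMulVec, vecMulVec_smul, dotProduct_mulVec]

theorem inv_add_smul_vecMulVec {n K : Type*} [Fintype n] [DecidableEq n] [Field K]
    {R : Matrix n n K} (hR : IsUnit R.det) (u v : n → K) (t : K)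
    (h : 1 + t * (v ⬝ᵥ R⁻¹ *ᵥ u) ≠ 0) :
    (R + t • vecMulVec u v)⁻¹ =
      R⁻¹ - (1 + t * (v ⬝ᵥ R⁻¹ *ᵥ u))⁻¹ • (t • (R⁻¹ * vecMulVec u v * R⁻¹)) := by
  refine inv_eq_left_inv ?_
  have hRR : R⁻¹ * R = 1 := nonsing_inv_mul R hR
  have key : R⁻¹ * vecMulVec u v * R⁻¹ * (R + t • vecMulVec u v) =
      (1 + t * (v ⬝ᵥ R⁻¹ *ᵥ u)) • (R⁻¹ * vecMulVec u v) := by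
    rw [mul_add, Matrix.mul_assoc _ R⁻¹ R, hRR, Matrix.mul_one, Matrix.mul_smul,
      Matrix.mul_assoc R⁻¹, Matrix.mul_assoc R⁻¹, vecMulVec_mul_mul_vecMulVec, Matrix.mul_smul,
      smul_smul, add_smul, one_smul]
  rw [sub_mul, Matrix.smul_mul, Matrix.smul_mul, key, smul_comm t, inv_smul_smul₀ h, mul_add, hRR,
    Matrix.mul_smul, add_sub_cancel_right]

end Matrix

theorem stmt18_general {m : ℕ} (E : Matrix (Fin m) (Fin m) ℂ)
    (α : Matrix (Fin m) (Fin 1) ℂ) (β : Matrix (Fin 1) (Fin m) ℂ)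
    (Q S : Matrix (Fin m ⊕ Fin 1) (Fin m ⊕ Fin 1) ℂ)
    (hQ : IsUnit Q.det)
    (hF : Matrix.fromBlocks E α β 0 = Q * S * Q⁻¹)
    (u v : (Fin m ⊕ Fin 1) → ℂ)
    (huv : Matrix.vecMulVec u v = Q⁻¹ * Matrix.fromBlocks (α * β) 0 0 0 * Q)
    (lam : ℂ)
    (hR : IsUnit ((1 : Matrix (Fin m ⊕ Fin 1) (Fin m ⊕ Fin 1) ℂ) + lam • S).det)
    (hden : 1 + lam ^ 2 * (v ⬝ᵥ (((1 : Matrix (Fin m ⊕ Fin 1) (Fin m ⊕ Fin 1) ℂ) + lam • S)⁻¹ *ᵥ u)) ≠ 0)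
    (b : Fin m → ℂ) :
    ((1 : Matrix (Fin m) (Fin m) ℂ) + lam • E)⁻¹ *ᵥ b = fun i =>
      ((Q * (((1 : Matrix (Fin m ⊕ Fin 1) (Fin m ⊕ Fin 1) ℂ) + lam • S)⁻¹ -
          (1 + lam ^ 2 * (v ⬝ᵥ (((1 : Matrix (Fin m ⊕ Fin 1) (Fin m ⊕ Fin 1) ℂ) + lam • S)⁻¹ *ᵥ u)))⁻¹ •
            ((lam ^ 2) • (((1 : Matrix (Fin m ⊕ Fin 1) (Fin m ⊕ Fin 1) ℂ) + lam • S)⁻¹ *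
              Matrix.vecMulVec u v *
              ((1 : Matrix (Fin m ⊕ Fin 1) (Fin m ⊕ Fin 1) ℂ) + lam • S)⁻¹))) * Q⁻¹) *ᵥ
        Sum.elim b (fun _ => 0)) (Sum.inl i) := by
  set G := fromBlocks (1 + lam • E + lam ^ 2 • (α * β)) (lam • α) (lam • β) 1 with hGdef
  have hT : fromBlocks (α * β) 0 0 0 = Q * vecMulVec u v * Q⁻¹ := by
    rw [huv, ← Matrix.mul_assoc, ← Matrix.mul_assoc, mul_nonsing_inv Q hQ, Matrix.one_mul,
      Matrix.mul_assoc, mul_nonsing_inv Q hQ, Matrix.mul_one]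
  have hG : G = Q * (1 + lam • S + lam ^ 2 • vecMulVec u v) * Q⁻¹ := by
    rw [hGdef, ← one_add_smul_fromBlocks, hF, hT, Matrix.mul_add, Matrix.mul_add, Matrix.add_mul,
      Matrix.add_mul, Matrix.mul_one, mul_nonsing_inv Q hQ, Matrix.mul_smul, Matrix.mul_smul,
      Matrix.smul_mul, Matrix.smul_mul, Matrix.mul_assoc, Matrix.mul_assoc]
  have hSchur : G⁻¹.toBlocks₁₁ = (1 + lam • E)⁻¹ := by
    rw [toBlocks₁₁_inv_fromBlocks_one₂₂, Matrix.smul_mul, Matrix.mul_smul, smul_smul, ← sq,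
      add_sub_cancel_right]
  funext i
  rw [← inv_add_smul_vecMulVec hR u v _ hden, ← inv_conj hQ, ← hG, mulVec_sumElim_zero_inl,
    hSchur]

theorem stmt18 {m : ℕ} (E : Matrix (Fin m) (Fin m) ℂ)
    (α : Matrix (Fin m) (Fin 1) ℂ) (β : Matrix (Fin 1) (Fin m) ℂ)
    (Q S : Matrix (Fin m ⊕ Fin 1) (Fin m ⊕ Fin 1) ℂ)
    (hQ : IsUnit Q.det) (hS : S.IsDiag)
    (hF : Matrix.fromBlocks E α β 0 = Q * S * Q⁻¹)
    (u v : (Fin m ⊕ Fin 1) → ℂ)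
    (huv : Matrix.vecMulVec u v = Q⁻¹ * Matrix.fromBlocks (α * β) 0 0 0 * Q)
    (lam : ℂ)
    (hR : IsUnit ((1 : Matrix (Fin m ⊕ Fin 1) (Fin m ⊕ Fin 1) ℂ) + lam • S).det)
    (hden : 1 + lam ^ 2 * (v ⬝ᵥ (((1 : Matrix (Fin m ⊕ Fin 1) (Fin m ⊕ Fin 1) ℂ) + lam • S)⁻¹ *ᵥ u)) ≠ 0)
    (hE : IsUnit ((1 : Matrix (Fin m) (Fin m) ℂ) + lam • E).det)
    (b : Fin m → ℂ) :
    ((1 : Matrix (Fin m) (Fin m) ℂ) + lam • E)⁻¹ *ᵥ b = fun i =>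
      ((Q * (((1 : Matrix (Fin m ⊕ Fin 1) (Fin m ⊕ Fin 1) ℂ) + lam • S)⁻¹ -
          (1 + lam ^ 2 * (v ⬝ᵥ (((1 : Matrix (Fin m ⊕ Fin 1) (Fin m ⊕ Fin 1) ℂ) + lam • S)⁻¹ *ᵥ u)))⁻¹ •
            ((lam ^ 2) • (((1 : Matrix (Fin m ⊕ Fin 1) (Fin m ⊕ Fin 1) ℂ) + lam • S)⁻¹ *
              Matrix.vecMulVec u v *
              ((1 : Matrix (Fin m ⊕ Fin 1) (Fin m ⊕ Fin 1) ℂ) + lam • S)⁻¹))) * Q⁻¹) *ᵥ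
        Sum.elim b (fun _ => 0)) (Sum.inl i) :=
  stmt18_general E α β Q S hQ hF u v huv lam hR hden b
end
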